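/- Let ρ, E > 0 and let ℳ₀(v) = ρ(2πE)^{−3/2} exp(−|v|²/(2E)) be the Maxwellian with mass ρ, zero momentum and energy 3ρE. Then there exists a constant C > 0 depending only on ρ and E such that for every ε, a, b > 0 with εa ≤ 2^{5/2}/3 for which ℳ_ε(v) = a e^{−b|v|²}/(1+εa e^{−b|v|²}) satisfies ∫ ℳ_ε dv = ρ and ∫ |v|² ℳ_ε dv = 3ρE, one has |H(ℳ₀) − H(ℳ_ε)| ≤ C ε, where H(g) = ∫ g log g dv denotes the Boltzmann entropy. -/

import Mathlib

open MeasureTheory Real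

noncomputable section

abbrev E3 := EuclideanSpace ℝ (Fin 3)

/-- Maxwellian `M(v) = a e^{-b|v|²}`. -/
def Mw (a b : ℝ) (v : E3) : ℝ := a * exp (-b * ‖v‖ ^ 2)

/-- Fermi–Dirac statistics `ℳ_ε = M/(1+εM)`. -/
def FD (ε a b : ℝ) (v : E3) : ℝ := Mw a b v / (1 + ε * Mw a b v)

/-- The Maxwellian `ℳ₀` with mass `ρ`, zero momentum and energy `3ρE`. -/
def M0 (ρ E : ℝ) (v : E3) : ℝ :=
  ρ * (2 * π * E) ^ (-(3 : ℝ) / 2) * exp (-‖v‖ ^ 2 / (2 * E))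

/-- Boltzmann entropy `H(g) = ∫ g log g`. -/
def boltzEnt (g : E3 → ℝ) : ℝ := ∫ v, g v * log (g v)

/-! Write `G = ∫ M` and `δ = ε ∫ M²`. Pointwise `0 ≤ M - ℳ_ε ≤ ε M²`, so the mass and energy
constraints become `ρ ≤ G ≤ ρ + δ` and `tρ ≤ G ≤ tρ + δ/2` for the temperature ratio `t = 2bE`.
The hypothesis `εa ≤ 2^{5/2}/3` is exactly `δ ≤ 2G/3`, which keeps `t` in `[2/3, 3]`; this bounds
`a` in terms of `ρ, E`, hence `δ = O(ε)`, and gives `|ρ(t - 1)| ≤ δ`. Since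
`log ℳ_ε = log a - b|v|² - log(1 + εM)`, the entropy difference is
`-ρ log(G/ρ) + (3/2)ρ(t - 1 - log t) + ∫ ℳ_ε log(1 + εM)`, and each term is `O(δ)`. -/

open Set Module

theorem integral_Ioi_pow_add_two_mul_exp_neg_mul_sq {b : ℝ} (hb : 0 < b) (q : ℕ) :
    ∫ y in Ioi (0 : ℝ), y ^ (q + 2) * exp (-b * y ^ 2) =
      (q + 1) / (2 * b) * ∫ y in Ioi (0 : ℝ), y ^ q * exp (-b * y ^ 2) := by
  have moment (k : ℕ) : ∫ y in Ioi (0 : ℝ), y ^ k * exp (-b * y ^ 2) =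
      b ^ (-((k : ℝ) + 1) / 2) * (1 / 2) * Gamma (((k : ℝ) + 1) / 2) := by
    rw [← integral_rpow_mul_exp_neg_mul_rpow two_pos (neg_one_lt_zero.trans_le k.cast_nonneg) hb]
    refine setIntegral_congr_fun measurableSet_Ioi fun y _ => ?_
    norm_cast
  have hGamma : Gamma ((((q + 2 : ℕ) : ℝ) + 1) / 2) = (q + 1) / 2 * Gamma (((q : ℝ) + 1) / 2) := by
    rw [show (((q + 2 : ℕ) : ℝ) + 1) / 2 = ((q : ℝ) + 1) / 2 + 1 by push_cast; ring,
      Gamma_add_one (by positivity)]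
  have hpow : b ^ (-(((q + 2 : ℕ) : ℝ) + 1) / 2) = b⁻¹ * b ^ (-((q : ℝ) + 1) / 2) := by
    rw [← rpow_neg_one b, ← rpow_add hb]
    push_cast; ring_nf
  rw [moment, moment, hGamma, hpow]
  field_simp

section Gaussian

variable {V : Type*} [NormedAddCommGroup V] [InnerProductSpace ℝ V] [FiniteDimensional ℝ V]
  [MeasurableSpace V] [BorelSpace V] [Nontrivial V]

theorem integrable_pow_norm_mul_exp_neg_mul_sq_norm {b : ℝ} (hb : 0 < b) (k : ℕ) :
    Integrable fun v : V => ‖v‖ ^ k * exp (-b * ‖v‖ ^ 2) := by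
  refine (integrable_fun_norm_addHaar volume (f := fun y => y ^ k * exp (-b * y ^ 2))).2 ?_
  refine (integrableOn_rpow_mul_exp_neg_mul_sq hb (s := ((finrank ℝ V - 1 + k : ℕ) : ℝ))
    (neg_one_lt_zero.trans_le (Nat.cast_nonneg _))).congr_fun (fun y _ => ?_) measurableSet_Ioi
  dsimp only
  rw [rpow_natCast, smul_eq_mul, pow_add, mul_assoc]

theorem integral_sq_norm_mul_exp_neg_mul_sq_norm {b : ℝ} (hb : 0 < b) :
    ∫ v : V, ‖v‖ ^ 2 * exp (-b * ‖v‖ ^ 2) =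
      finrank ℝ V / (2 * b) * ∫ v : V, exp (-b * ‖v‖ ^ 2) := by
  obtain ⟨m, hm⟩ := Nat.exists_eq_add_of_lt (finrank_pos (R := ℝ) (M := V))
  rw [integral_fun_norm_addHaar volume (fun y => y ^ 2 * exp (-b * y ^ 2)),
    integral_fun_norm_addHaar volume (fun y => exp (-b * y ^ 2))]
  simp only [hm, smul_eq_mul, nsmul_eq_mul, zero_add, Nat.add_sub_cancel, ← mul_assoc, ← pow_add]
  rw [integral_Ioi_pow_add_two_mul_exp_neg_mul_sq hb]
  push_cast
  ring

end Gaussian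

section Maxwellian

variable {a b : ℝ}

theorem Mw_pos (ha : 0 < a) (v : E3) : 0 < Mw a b v := by
  unfold Mw; positivity

theorem continuous_Mw : Continuous (Mw a b) := by
  unfold Mw; fun_prop

theorem Mw_sq (v : E3) : Mw a b v ^ 2 = Mw (a ^ 2) (2 * b) v := by
  rw [Mw, Mw, mul_pow, sq (exp _), ← exp_add]
  ring_nf

theorem integrable_pow_norm_mul_Mw (hb : 0 < b) (k : ℕ) :
    Integrable fun v : E3 => ‖v‖ ^ k * Mw a b v :=
  ((integrable_pow_norm_mul_exp_neg_mul_sq_norm hb k).const_mul a).congr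
    (.of_forall fun v => by simp only [Mw]; ring)

theorem integrable_pow_norm_mul_Mw_sq (hb : 0 < b) (k : ℕ) :
    Integrable fun v : E3 => ‖v‖ ^ k * Mw a b v ^ 2 := by
  simpa only [Mw_sq] using integrable_pow_norm_mul_Mw (a := a ^ 2) (by positivity : 0 < 2 * b) k

theorem integral_Mw (hb : 0 < b) : ∫ v, Mw a b v = a * (π / b) ^ ((3 : ℝ) / 2) := by
  simp only [Mw]
  rw [integral_const_mul, GaussianFourier.integral_rexp_neg_mul_sq_norm hb,
    finrank_euclideanSpace_fin]
  norm_num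

theorem integral_sq_norm_mul_Mw (hb : 0 < b) :
    ∫ v, ‖v‖ ^ 2 * Mw a b v = 3 / (2 * b) * ∫ v, Mw a b v := by
  simp only [Mw, mul_left_comm _ a]
  rw [integral_const_mul, integral_const_mul, integral_sq_norm_mul_exp_neg_mul_sq_norm hb,
    finrank_euclideanSpace_fin]
  push_cast
  ring

theorem integral_Mw_sq (hb : 0 < b) :
    ∫ v, Mw a b v ^ 2 = 2 ^ (-(3 : ℝ) / 2) * a * ∫ v, Mw a b v := by
  simp only [Mw_sq]
  rw [integral_Mw (by positivity), integral_Mw hb, show π / (2 * b) = (π / b) / 2 by ring,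
    div_rpow (by positivity) zero_le_two, neg_div, rpow_neg zero_le_two]
  ring

theorem integral_Mw_sq_le (ha : 0 ≤ a) (hb : 0 < b) :
    ∫ v, Mw a b v ^ 2 ≤ a * ∫ v, Mw a b v := by
  rw [integral_Mw_sq hb, integral_Mw hb, mul_assoc]
  exact mul_le_of_le_one_left (by positivity)
    (rpow_le_one_of_one_le_of_nonpos one_le_two (by norm_num))

theorem mul_integral_Mw_sq_le_two_thirds {ε : ℝ} (ha : 0 < a) (hb : 0 < b)
    (hεa : ε * a ≤ 2 ^ ((5 : ℝ) / 2) / 3) :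
    ε * ∫ v, Mw a b v ^ 2 ≤ 2 / 3 * ∫ v, Mw a b v := by
  have hκ : ε * a * 2 ^ (-(3 : ℝ) / 2) ≤ 2 / 3 :=
    calc ε * a * 2 ^ (-(3 : ℝ) / 2) ≤ 2 ^ ((5 : ℝ) / 2) / 3 * 2 ^ (-(3 : ℝ) / 2) := by gcongr
      _ = 2 / 3 := by rw [div_mul_eq_mul_div, ← rpow_add two_pos]; norm_num
  rw [integral_Mw_sq hb, ← mul_assoc, ← mul_assoc, mul_right_comm ε]
  exact mul_le_mul_of_nonneg_right hκ (by rw [integral_Mw hb]; positivity)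

theorem integral_sq_norm_mul_Mw_sq (hb : 0 < b) :
    ∫ v, ‖v‖ ^ 2 * Mw a b v ^ 2 = 3 / (4 * b) * ∫ v, Mw a b v ^ 2 := by
  simp only [Mw_sq]
  rw [integral_sq_norm_mul_Mw (by positivity)]
  ring

end Maxwellian

theorem M0_eq_Mw (ρ E : ℝ) : M0 ρ E = Mw (ρ * (2 * π * E) ^ (-(3 : ℝ) / 2)) (1 / (2 * E)) := by
  funext v
  rw [M0, Mw]
  ring_nf

theorem integral_M0 {ρ E : ℝ} (hE : 0 < E) : ∫ v, M0 ρ E v = ρ := by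
  rw [M0_eq_Mw, integral_Mw (by positivity), show π / (1 / (2 * E)) = 2 * π * E by field_simp,
    mul_assoc, ← rpow_add (by positivity)]
  norm_num

section FermiDirac

variable {ε a b : ℝ}

theorem FD_zero : FD 0 a b = Mw a b := by
  funext v; simp [FD]

theorem one_le_one_add_mul_Mw (hε : 0 ≤ ε) (ha : 0 < a) (v : E3) : 1 ≤ 1 + ε * Mw a b v :=
  le_add_of_nonneg_right (mul_nonneg hε (Mw_pos ha v).le)

theorem one_add_mul_Mw_pos (hε : 0 ≤ ε) (ha : 0 < a) (v : E3) : 0 < 1 + ε * Mw a b v :=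
  one_pos.trans_le (one_le_one_add_mul_Mw hε ha v)

theorem FD_pos (hε : 0 ≤ ε) (ha : 0 < a) (v : E3) : 0 < FD ε a b v :=
  div_pos (Mw_pos ha v) (one_add_mul_Mw_pos hε ha v)

theorem FD_le_Mw (hε : 0 ≤ ε) (ha : 0 < a) (v : E3) : FD ε a b v ≤ Mw a b v :=
  div_le_self (Mw_pos ha v).le (one_le_one_add_mul_Mw hε ha v)

theorem Mw_sub_FD_le (hε : 0 ≤ ε) (ha : 0 < a) (v : E3) :
    Mw a b v - FD ε a b v ≤ ε * Mw a b v ^ 2 := by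
  have hne := (one_add_mul_Mw_pos hε ha (b := b) v).ne'
  have h : Mw a b v - FD ε a b v = ε * Mw a b v ^ 2 / (1 + ε * Mw a b v) := by
    rw [FD, eq_div_iff hne, sub_mul, div_mul_cancel₀ _ hne]
    ring
  rw [h]
  exact div_le_self (by positivity) (one_le_one_add_mul_Mw hε ha v)

theorem FD_mul_log_nonneg (hε : 0 ≤ ε) (ha : 0 < a) (v : E3) :
    0 ≤ FD ε a b v * log (1 + ε * Mw a b v) :=
  mul_nonneg (FD_pos hε ha v).le (log_nonneg (one_le_one_add_mul_Mw hε ha v))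

theorem FD_mul_log_le (hε : 0 ≤ ε) (ha : 0 < a) (v : E3) :
    FD ε a b v * log (1 + ε * Mw a b v) ≤ ε * Mw a b v ^ 2 :=
  calc FD ε a b v * log (1 + ε * Mw a b v) ≤ Mw a b v * (ε * Mw a b v) := by
        gcongr
        · exact log_nonneg (one_le_one_add_mul_Mw hε ha v)
        · exact (Mw_pos ha v).le
        · exact FD_le_Mw hε ha v
        · linarith [log_le_sub_one_of_pos (one_add_mul_Mw_pos hε ha (b := b) v)]
    _ = ε * Mw a b v ^ 2 := by ring

theorem log_FD (hε : 0 ≤ ε) (ha : 0 < a) (v : E3) :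
    log (FD ε a b v) = log a - b * ‖v‖ ^ 2 - log (1 + ε * Mw a b v) := by
  rw [FD, log_div (Mw_pos ha v).ne' (one_add_mul_Mw_pos hε ha v).ne', Mw,
    log_mul ha.ne' (exp_ne_zero _), log_exp]
  ring

theorem continuous_one_add_mul_Mw : Continuous fun v : E3 => 1 + ε * Mw a b v :=
  continuous_const.add (continuous_const.mul continuous_Mw)

theorem continuous_FD (hε : 0 ≤ ε) (ha : 0 < a) : Continuous (FD ε a b) :=
  continuous_Mw.div continuous_one_add_mul_Mw fun v => (one_add_mul_Mw_pos hε ha v).ne'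

theorem integrable_pow_norm_mul_FD (hε : 0 ≤ ε) (ha : 0 < a) (hb : 0 < b) (k : ℕ) :
    Integrable fun v : E3 => ‖v‖ ^ k * FD ε a b v := by
  refine (integrable_pow_norm_mul_Mw (a := a) hb k).mono'
    ((continuous_norm.pow k).mul (continuous_FD hε ha)).aestronglyMeasurable
    (.of_forall fun v => ?_)
  rw [norm_of_nonneg (mul_nonneg (by positivity) (FD_pos hε ha v).le)]
  exact mul_le_mul_of_nonneg_left (FD_le_Mw hε ha v) (by positivity)

theorem integrable_FD_mul_log (hε : 0 ≤ ε) (ha : 0 < a) (hb : 0 < b) :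
    Integrable fun v : E3 => FD ε a b v * log (1 + ε * Mw a b v) := by
  have hMw2 : Integrable fun v : E3 => ε * Mw a b v ^ 2 := by
    simpa using (integrable_pow_norm_mul_Mw_sq (a := a) hb 0).const_mul ε
  refine hMw2.mono' ((continuous_FD hε ha).mul (continuous_one_add_mul_Mw.log fun v =>
    (one_add_mul_Mw_pos hε ha v).ne')).aestronglyMeasurable (.of_forall fun v => ?_)
  rw [norm_of_nonneg (FD_mul_log_nonneg hε ha v)]
  exact FD_mul_log_le hε ha v

theorem integral_pow_norm_mul_Mw_sub_FD_bounds (hε : 0 ≤ ε) (ha : 0 < a) (hb : 0 < b) (k : ℕ) :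
    0 ≤ (∫ v, ‖v‖ ^ k * Mw a b v) - ∫ v, ‖v‖ ^ k * FD ε a b v ∧
      (∫ v, ‖v‖ ^ k * Mw a b v) - ∫ v, ‖v‖ ^ k * FD ε a b v ≤
        ε * ∫ v, ‖v‖ ^ k * Mw a b v ^ 2 := by
  have hMw := integrable_pow_norm_mul_Mw (a := a) hb k
  have hFD := integrable_pow_norm_mul_FD hε ha hb k
  rw [← integral_sub hMw hFD, ← integral_const_mul]
  constructor
  · exact integral_nonneg fun v => sub_nonneg.2 <|
      mul_le_mul_of_nonneg_left (FD_le_Mw hε ha v) (by positivity)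
  · refine integral_mono (hMw.sub hFD) ((integrable_pow_norm_mul_Mw_sq hb k).const_mul ε)
      fun v => ?_
    calc ‖v‖ ^ k * Mw a b v - ‖v‖ ^ k * FD ε a b v = ‖v‖ ^ k * (Mw a b v - FD ε a b v) := by
          ring
      _ ≤ ‖v‖ ^ k * (ε * Mw a b v ^ 2) := by gcongr; exact Mw_sub_FD_le hε ha v
      _ = ε * (‖v‖ ^ k * Mw a b v ^ 2) := by ring

theorem integral_FD_mul_log_bounds (hε : 0 ≤ ε) (ha : 0 < a) (hb : 0 < b) :
    0 ≤ ∫ v, FD ε a b v * log (1 + ε * Mw a b v) ∧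
      ∫ v, FD ε a b v * log (1 + ε * Mw a b v) ≤ ε * ∫ v, Mw a b v ^ 2 := by
  have hMw2 : Integrable fun v : E3 => Mw a b v ^ 2 := by
    simpa using integrable_pow_norm_mul_Mw_sq (a := a) hb 0
  rw [← integral_const_mul]
  exact ⟨integral_nonneg fun v => FD_mul_log_nonneg hε ha v,
    integral_mono (integrable_FD_mul_log hε ha hb) (hMw2.const_mul ε) (FD_mul_log_le hε ha)⟩

theorem integral_Mw_sub_FD_bounds (hε : 0 ≤ ε) (ha : 0 < a) (hb : 0 < b) :
    0 ≤ (∫ v, Mw a b v) - ∫ v, FD ε a b v ∧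
      (∫ v, Mw a b v) - ∫ v, FD ε a b v ≤ ε * ∫ v, Mw a b v ^ 2 := by
  simpa using integral_pow_norm_mul_Mw_sub_FD_bounds hε ha hb 0

theorem integral_Mw_sub_energy_FD_bounds (hε : 0 ≤ ε) (ha : 0 < a) (hb : 0 < b) :
    0 ≤ (∫ v, Mw a b v) - 2 * b / 3 * ∫ v, ‖v‖ ^ 2 * FD ε a b v ∧
      (∫ v, Mw a b v) - 2 * b / 3 * ∫ v, ‖v‖ ^ 2 * FD ε a b v ≤ ε * (∫ v, Mw a b v ^ 2) / 2 := by
  obtain ⟨h₀, h₁⟩ := integral_pow_norm_mul_Mw_sub_FD_bounds hε ha hb 2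
  rw [integral_sq_norm_mul_Mw hb] at h₀ h₁
  rw [integral_sq_norm_mul_Mw_sq hb] at h₁
  have hscale : 0 ≤ 2 * b / 3 := by positivity
  have hlhs : (∫ v, Mw a b v) - 2 * b / 3 * ∫ v, ‖v‖ ^ 2 * FD ε a b v =
      2 * b / 3 * ((3 / (2 * b) * ∫ v, Mw a b v) - ∫ v, ‖v‖ ^ 2 * FD ε a b v) := by
    field_simp
  have hrhs : ε * (∫ v, Mw a b v ^ 2) / 2 =
      2 * b / 3 * (ε * (3 / (4 * b) * ∫ v, Mw a b v ^ 2)) := by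
    field_simp
    ring
  rw [hlhs, hrhs]
  exact ⟨mul_nonneg hscale h₀, mul_le_mul_of_nonneg_left h₁ hscale⟩

theorem boltzEnt_FD (hε : 0 ≤ ε) (ha : 0 < a) (hb : 0 < b) :
    boltzEnt (FD ε a b) = log a * (∫ v, FD ε a b v) - b * (∫ v, ‖v‖ ^ 2 * FD ε a b v)
      - ∫ v, FD ε a b v * log (1 + ε * Mw a b v) := by
  have hpt (v : E3) : FD ε a b v * log (FD ε a b v) = log a * FD ε a b v
      - b * (‖v‖ ^ 2 * FD ε a b v) - FD ε a b v * log (1 + ε * Mw a b v) := by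
    rw [log_FD hε ha]; ring
  have hFD : Integrable fun v => log a * FD ε a b v := by
    simpa using (integrable_pow_norm_mul_FD hε ha hb 0).const_mul (log a)
  have hFD2 : Integrable fun v => b * (‖v‖ ^ 2 * FD ε a b v) :=
    (integrable_pow_norm_mul_FD hε ha hb 2).const_mul b
  simp only [boltzEnt, hpt]
  rw [integral_sub (f := fun v => log a * FD ε a b v - b * (‖v‖ ^ 2 * FD ε a b v))
    (hFD.sub hFD2) (integrable_FD_mul_log hε ha hb), integral_sub hFD hFD2,
    integral_const_mul, integral_const_mul]

theorem boltzEnt_Mw (ha : 0 < a) (hb : 0 < b) :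
    boltzEnt (Mw a b) = (log a - 3 / 2) * ∫ v, Mw a b v := by
  have h := boltzEnt_FD le_rfl ha hb
  simp only [FD_zero, zero_mul, add_zero, log_one, mul_zero, integral_zero, sub_zero] at h
  rw [h, integral_sq_norm_mul_Mw hb]
  field_simp

end FermiDirac

theorem Real.sub_one_sub_log_le_abs_sub_one {t : ℝ} (ht : 1 / 2 ≤ t) : t - 1 - log t ≤ |t - 1| := by
  rcases le_total 1 t with h | h
  · rw [abs_of_nonneg (by linarith)]
    linarith [log_nonneg h]
  · have ht₀ : 0 < t := by linarith
    have hlog := one_sub_inv_le_log_of_pos ht₀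
    have hquad : 2 * t - 2 ≤ 1 - t⁻¹ := by
      rw [← sub_nonneg, show 1 - t⁻¹ - (2 * t - 2) = (2 * t - 1) * (1 - t) / t by field_simp; ring]
      exact div_nonneg (mul_nonneg (by linarith) (by linarith)) ht₀.le
    rw [abs_of_nonpos (by linarith)]
    linarith

theorem bounds_of_moment_gaps {ρ t G δ : ℝ} (hρ : 0 < ρ) (hmass₀ : ρ ≤ G) (hmass₁ : G ≤ ρ + δ)
    (henergy₀ : t * ρ ≤ G) (henergy₁ : G ≤ t * ρ + δ / 2) (hδ : δ ≤ 2 / 3 * G) :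
    G ≤ 3 * ρ ∧ 2 / 3 ≤ t ∧ t ≤ 3 ∧ |ρ * (t - 1)| ≤ δ := by
  have hG : G ≤ 3 * ρ := by linarith
  refine ⟨hG, ?_, ?_, abs_le.2 ⟨by linarith, by linarith⟩⟩
  · exact le_of_mul_le_mul_right (by linarith) hρ
  · exact le_of_mul_le_mul_right (by linarith) hρ

theorem entropy_gap_eq {ρ E a b I : ℝ} (hρ : 0 < ρ) (hE : 0 < E) (ha : 0 < a) (hb : 0 < b) :
    (log (ρ * (2 * π * E) ^ (-(3 : ℝ) / 2)) - 3 / 2) * ρ - (log a * ρ - b * (3 * ρ * E) - I) =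
      -(ρ * log (a * (π / b) ^ ((3 : ℝ) / 2) / ρ)) + 3 / 2 * (ρ * (2 * b * E - 1 - log (2 * b * E)))
        + I := by
  have h₀ : log (ρ * (2 * π * E) ^ (-(3 : ℝ) / 2)) = log ρ - 3 / 2 * log (2 * π * E) := by
    rw [log_mul hρ.ne' (by positivity), log_rpow (by positivity)]
    ring
  have h₁ : log (a * (π / b) ^ ((3 : ℝ) / 2) / ρ) = log a + 3 / 2 * log (π / b) - log ρ := by
    rw [log_div (by positivity) hρ.ne', log_mul ha.ne' (by positivity), log_rpow (by positivity)]
  have h₂ : log (2 * π * E) = log (2 * b * E) + log (π / b) := by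
    rw [← log_mul (by positivity) (by positivity)]
    congr 1
    field_simp
  rw [h₀, h₁, h₂]
  ring

theorem abs_boltzEnt_M0_sub_FD_le {ρ E ε a b : ℝ} (hρ : 0 < ρ) (hE : 0 < E) (hε : 0 ≤ ε)
    (ha : 0 < a) (hb : 0 < b) (hmass : ∫ v, FD ε a b v = ρ)
    (henergy : ∫ v, ‖v‖ ^ 2 * FD ε a b v = 3 * ρ * E) (ht : 1 / 2 ≤ 2 * b * E)
    (hρt : |ρ * (2 * b * E - 1)| ≤ ε * ∫ v, Mw a b v ^ 2) :
    |boltzEnt (M0 ρ E) - boltzEnt (FD ε a b)| ≤ 5 / 2 * (ε * ∫ v, Mw a b v ^ 2) := by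
  obtain ⟨hmass₀, hmass₁⟩ := integral_Mw_sub_FD_bounds hε ha hb
  obtain ⟨hI₀, hI₁⟩ := integral_FD_mul_log_bounds hε ha hb
  rw [hmass, integral_Mw hb] at hmass₀ hmass₁
  set G := a * (π / b) ^ ((3 : ℝ) / 2)
  have hlogG₀ : 0 ≤ ρ * log (G / ρ) :=
    mul_nonneg hρ.le (log_nonneg ((one_le_div hρ).2 (by linarith)))
  have hlogG₁ : ρ * log (G / ρ) ≤ G - ρ := by
    have := log_le_sub_one_of_pos (show 0 < G / ρ by positivity)
    calc ρ * log (G / ρ) ≤ ρ * (G / ρ - 1) := by gcongr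
      _ = G - ρ := by field_simp
  have hlogt₀ : 0 ≤ ρ * (2 * b * E - 1 - log (2 * b * E)) :=
    mul_nonneg hρ.le (by linarith [log_le_sub_one_of_pos (show 0 < 2 * b * E by linarith)])
  have hlogt₁ : ρ * (2 * b * E - 1 - log (2 * b * E)) ≤ |ρ * (2 * b * E - 1)| := by
    rw [abs_mul, abs_of_pos hρ]
    exact mul_le_mul_of_nonneg_left (Real.sub_one_sub_log_le_abs_sub_one ht) hρ.le
  rw [M0_eq_Mw, boltzEnt_Mw (by positivity) (by positivity), ← M0_eq_Mw, integral_M0 hE,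
    boltzEnt_FD hε ha hb, hmass, henergy, entropy_gap_eq hρ hE ha hb]
  exact abs_le.2 ⟨by linarith, by linarith⟩

theorem le_div_rpow_of_mul_rpow_le {c E a b : ℝ} (hE : 0 < E) (ha : 0 ≤ a) (hb : 0 < b)
    (hG : a * (π / b) ^ ((3 : ℝ) / 2) ≤ c) (ht : 2 * b * E ≤ 3) :
    a ≤ c / (2 * π * E / 3) ^ ((3 : ℝ) / 2) := by
  rw [le_div_iff₀ (by positivity)]
  have hπ : 2 * π * E / 3 ≤ π / b := by
    rw [div_le_div_iff₀ three_pos hb]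
    nlinarith [pi_pos]
  exact (mul_le_mul_of_nonneg_left (rpow_le_rpow (by positivity) hπ (by norm_num)) ha).trans hG

/-- The Boltzmann entropies of the Maxwellian `ℳ₀` and of the Fermi–Dirac statistics
`ℳ_ε` sharing the same mass `ρ`, zero momentum and energy `3ρE` differ by at most
`Cε`, with `C` depending only on `ρ` and `E`, provided `εa ≤ 2^{5/2}/3`. -/
theorem stmt18 (ρ E : ℝ) (hρ : 0 < ρ) (hE : 0 < E) :
    ∃ C : ℝ, 0 < C ∧
      ∀ ε a b : ℝ, 0 < ε → 0 < a → 0 < b →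
        ε * a ≤ 2 ^ ((5 : ℝ) / 2) / 3 →
        (∫ v, FD ε a b v) = ρ →
        (∫ v, ‖v‖ ^ 2 * FD ε a b v) = 3 * ρ * E →
        |boltzEnt (M0 ρ E) - boltzEnt (FD ε a b)| ≤ C * ε := by
  refine ⟨5 / 2 * (3 * ρ / (2 * π * E / 3) ^ ((3 : ℝ) / 2) * (3 * ρ)), by positivity, ?_⟩
  intro ε a b hε ha hb hεa hmass henergy
  obtain ⟨hmass₀, hmass₁⟩ := integral_Mw_sub_FD_bounds hε.le ha hb
  obtain ⟨henergy₀, henergy₁⟩ := integral_Mw_sub_energy_FD_bounds hε.le ha hb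
  rw [hmass] at hmass₀ hmass₁
  rw [henergy] at henergy₀ henergy₁
  obtain ⟨hG, ht, ht₃, hρt⟩ := bounds_of_moment_gaps (t := 2 * b * E) hρ (by linarith)
    (by linarith) (by linarith) (by linarith) (mul_integral_Mw_sq_le_two_thirds ha hb hεa)
  have ha' := le_div_rpow_of_mul_rpow_le hE ha.le hb (integral_Mw hb ▸ hG) ht₃
  calc |boltzEnt (M0 ρ E) - boltzEnt (FD ε a b)| ≤ 5 / 2 * (ε * ∫ v, Mw a b v ^ 2) :=
        abs_boltzEnt_M0_sub_FD_le hρ hE hε.le ha hb hmass henergy (by linarith) hρt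
    _ ≤ 5 / 2 * (a * (∫ v, Mw a b v)) * ε := by
        rw [mul_comm ε, ← mul_assoc]
        gcongr
        exact integral_Mw_sq_le ha.le hb
    _ ≤ _ := by gcongr; linarith
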